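/- For all f, g ∈ Δ, the maximal domain of the Jacobi expression ℓ[·] in L²((-1,1); (1-x²)^{-1}dx), one has lim_{x→1⁻} f'(x)ḡ(x) = 0 and lim_{x→-1⁺} f'(x)ḡ(x) = 0 (the strong limit-point condition at both endpoints). -/

import Mathlib

/-!
Write `w(x) = 1 - x`. For `u ∈ Δ`, the identity `(1 - x²) u'' = k u - ℓ[u]` gives
`∫ |u''|² (1 - x²) < ∞`; splitting `|u''|` by AM–GM against this weight yields
`∫₀ˣ |u''| = O(w^{-1/4})`, hence `|u'| = O(w^{-1/4})`. So `u'` is integrable near `1` and `u`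
has a limit there, which must vanish because `∫ |u|² / (1 - x²) < ∞`; integrating back gives
`|u| = O(w^{3/4})`. Therefore `|f' ḡ| = O(w^{1/2}) → 0` at `1`, and the reflection `x ↦ -x`,
which preserves `Δ`, handles the endpoint `-1`.
-/

open MeasureTheory Set Filter Topology

/-- Membership in the maximal domain `Δ` of the Jacobi expression
`ℓ[y](x) = -(1-x²)y''(x) + k·y(x)` in `L²((-1,1); (1-x²)⁻¹ dx)`. -/
def InJacobiMaxDomain (k : ℝ) (f f' f'' : ℝ → ℂ) : Prop :=
  (∀ x ∈ Ioo (-1 : ℝ) 1, ∀ y ∈ Ioo (-1 : ℝ) 1, IntervalIntegrable f' volume x y) ∧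
  (∀ x ∈ Ioo (-1 : ℝ) 1, ∀ y ∈ Ioo (-1 : ℝ) 1, IntervalIntegrable f'' volume x y) ∧
  (∀ x ∈ Ioo (-1 : ℝ) 1, ∀ y ∈ Ioo (-1 : ℝ) 1, f y - f x = ∫ t in x..y, f' t) ∧
  (∀ x ∈ Ioo (-1 : ℝ) 1, ∀ y ∈ Ioo (-1 : ℝ) 1, f' y - f' x = ∫ t in x..y, f'' t) ∧
  IntegrableOn (fun x => ‖f x‖ ^ 2 * (1 - x ^ 2)⁻¹) (Ioo (-1 : ℝ) 1) ∧
  IntegrableOn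
    (fun x => ‖-((1 - x ^ 2 : ℝ) : ℂ) * f'' x + (k : ℂ) * f x‖ ^ 2 * (1 - x ^ 2)⁻¹)
    (Ioo (-1 : ℝ) 1)

lemma locallyIntegrableOn_Ioo_of_intervalIntegrable {E : Type*} [NormedAddCommGroup E]
    {f : ℝ → E} {a b : ℝ} (hf : ∀ x ∈ Ioo a b, ∀ y ∈ Ioo a b, IntervalIntegrable f volume x y) :
    LocallyIntegrableOn f (Ioo a b) := by
  intro x hx
  obtain ⟨p, hap, hpx⟩ := exists_between hx.1
  obtain ⟨q, hxq, hqb⟩ := exists_between hx.2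
  refine ⟨Ioo p q, mem_nhdsWithin_of_mem_nhds (Ioo_mem_nhds hpx hxq), ?_⟩
  exact (intervalIntegrable_iff_integrableOn_Ioo_of_le (hpx.trans hxq).le).mp
    (hf p ⟨hap, hpx.trans hx.2⟩ q ⟨hx.1.trans hxq, hqb⟩)

lemma le_mul_sq_add_inv (a : ℝ) {w l : ℝ} (hw : 0 < w) (hl : 0 < l) :
    a ≤ l / 2 * (a ^ 2 * w) + (2 * l)⁻¹ * w⁻¹ := by
  have key : 0 ≤ (l * w * a - 1) ^ 2 := sq_nonneg _
  have h : l / 2 * (a ^ 2 * w) + (2 * l)⁻¹ * w⁻¹ = ((l * w * a) ^ 2 + 1) / (2 * l * w) := by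
    field_simp
  rw [h, le_div_iff₀ (by positivity)]
  nlinarith

lemma inv_one_sub_sq_le_rpow {t : ℝ} (ht₀ : 0 ≤ t) (ht₁ : t < 1) :
    (1 - t ^ 2)⁻¹ ≤ (1 - t) ^ (-3/2 : ℝ) := by
  have h1t : 0 < 1 - t := by linarith
  calc (1 - t ^ 2)⁻¹ ≤ (1 - t)⁻¹ := inv_anti₀ h1t (by nlinarith)
    _ = (1 - t) ^ (-1 : ℝ) := (Real.rpow_neg_one _).symm
    _ ≤ (1 - t) ^ (-3/2 : ℝ) :=
      Real.rpow_le_rpow_of_exponent_ge h1t (by linarith) (by norm_num)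

lemma integral_one_sub_rpow {r x y : ℝ}
    (h : -1 < r ∨ r ≠ -1 ∧ (0 : ℝ) ∉ uIcc (1 - y) (1 - x)) :
    ∫ t in x..y, (1 - t) ^ r = ((1 - x) ^ (r + 1) - (1 - y) ^ (r + 1)) / (r + 1) := by
  rw [intervalIntegral.integral_comp_sub_left (fun s => s ^ r), integral_rpow h]

lemma integral_one_sub_rpow_neg_three_halves_le {x : ℝ} (hx : x < 1) :
    ∫ t in 0..x, (1 - t) ^ (-3/2 : ℝ) ≤ 2 * (1 - x) ^ (-1/2 : ℝ) := by
  have h0 : (0 : ℝ) ∉ uIcc (1 - x) (1 - 0) := by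
    rw [mem_uIcc]; rintro (⟨h, _⟩ | ⟨_, h⟩) <;> linarith
  rw [integral_one_sub_rpow (Or.inr ⟨by norm_num, h0⟩)]
  norm_num
  linarith [show (1 - (1 - x) ^ (-(1/2) : ℝ)) / -(1/2) = 2 * (1 - x) ^ (-(1/2) : ℝ) - 2 by ring]

lemma setIntegral_Ioo_one_sub_rpow {r x : ℝ} (hr : -1 < r) (hx : x ≤ 1) :
    ∫ t in Ioo x 1, (1 - t) ^ r = (1 - x) ^ (r + 1) / (r + 1) := by
  rw [← integral_Ioc_eq_integral_Ioo, ← intervalIntegral.integral_of_le hx,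
    integral_one_sub_rpow (Or.inl hr), sub_self, Real.zero_rpow (by linarith), sub_zero]

lemma tendsto_one_sub_rpow_nhdsLT_one {r : ℝ} (hr : 0 < r) :
    Tendsto (fun x : ℝ => (1 - x) ^ r) (𝓝[<] 1) (𝓝 0) :=
  (((Real.continuous_rpow_const hr.le).comp (continuous_const.sub continuous_id)).tendsto' 1 0
    (by simp [Real.zero_rpow hr.ne'])).mono_left nhdsWithin_le_nhds

lemma integral_norm_le_of_integrableOn_norm_sq_mul {E : Type*} [NormedAddCommGroup E]
    {φ : ℝ → E} {x : ℝ} (hx₀ : 0 ≤ x) (hx₁ : x < 1) (hφ : IntervalIntegrable φ volume 0 x)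
    (hw : IntegrableOn (fun t => ‖φ t‖ ^ 2 * (1 - t ^ 2)) (Ico 0 1)) :
    ∫ t in 0..x, ‖φ t‖ ≤
      ((∫ t in Ico 0 1, ‖φ t‖ ^ 2 * (1 - t ^ 2)) / 2 + 1) * (1 - x) ^ (-1/4 : ℝ) := by
  set M := ∫ t in Ico 0 1, ‖φ t‖ ^ 2 * (1 - t ^ 2)
  set l := (1 - x) ^ (-1/4 : ℝ)
  have hl : 0 < l := Real.rpow_pos_of_pos (by linarith) _
  -- AM–GM with the weight `l`, chosen so that the two resulting terms are of the same order
  have hpt : ∀ t ∈ Icc 0 x,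
      ‖φ t‖ ≤ l / 2 * (‖φ t‖ ^ 2 * (1 - t ^ 2)) + (2 * l)⁻¹ * (1 - t) ^ (-3/2 : ℝ) := by
    rintro t ⟨ht₀, htx⟩
    calc ‖φ t‖ ≤ l / 2 * (‖φ t‖ ^ 2 * (1 - t ^ 2)) + (2 * l)⁻¹ * (1 - t ^ 2)⁻¹ :=
          le_mul_sq_add_inv _ (by nlinarith) hl
      _ ≤ _ := by gcongr; exact inv_one_sub_sq_le_rpow ht₀ (by linarith)
  have hwx : IntervalIntegrable (fun t => ‖φ t‖ ^ 2 * (1 - t ^ 2)) volume 0 x :=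
    (intervalIntegrable_iff_integrableOn_Ioc_of_le hx₀).mpr
      (hw.mono_set fun t ht => ⟨ht.1.le, ht.2.trans_lt hx₁⟩)
  have hpow : IntervalIntegrable (fun t : ℝ => (1 - t) ^ (-3/2 : ℝ)) volume 0 x := by
    refine ContinuousOn.intervalIntegrable (ContinuousOn.rpow_const (by fun_prop) fun t ht => ?_)
    rw [uIcc_of_le hx₀] at ht
    exact Or.inl (by linarith [ht.2])
  have hW : ∫ t in 0..x, ‖φ t‖ ^ 2 * (1 - t ^ 2) ≤ M := by
    rw [intervalIntegral.integral_of_le hx₀]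
    refine setIntegral_mono_set hw ?_
      (Eventually.of_forall fun t ht => ⟨ht.1.le, ht.2.trans_lt hx₁⟩)
    refine ae_restrict_of_forall_mem measurableSet_Ico fun t ht => ?_
    have : 0 ≤ 1 - t ^ 2 := by nlinarith [ht.1, ht.2]
    positivity
  have hl2 : (1 - x) ^ (-1/2 : ℝ) = l ^ 2 := by
    rw [← Real.rpow_mul_natCast (by linarith)]; norm_num
  calc ∫ t in 0..x, ‖φ t‖
      ≤ ∫ t in 0..x, l / 2 * (‖φ t‖ ^ 2 * (1 - t ^ 2)) + (2 * l)⁻¹ * (1 - t) ^ (-3/2 : ℝ) :=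
        intervalIntegral.integral_mono_on hx₀ hφ.norm
          ((hwx.const_mul _).add (hpow.const_mul _)) hpt
    _ = l / 2 * (∫ t in 0..x, ‖φ t‖ ^ 2 * (1 - t ^ 2))
          + (2 * l)⁻¹ * ∫ t in 0..x, (1 - t) ^ (-3/2 : ℝ) := by
        rw [intervalIntegral.integral_add (hwx.const_mul _) (hpow.const_mul _),
          intervalIntegral.integral_const_mul, intervalIntegral.integral_const_mul]
    _ ≤ l / 2 * M + (2 * l)⁻¹ * (2 * (1 - x) ^ (-1/2 : ℝ)) := by
        gcongr
        exact integral_one_sub_rpow_neg_three_halves_le hx₁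
    _ = (M / 2 + 1) * l := by rw [hl2]; field_simp

lemma exists_norm_sub_le_setIntegral {E : Type*} [NormedAddCommGroup E] [NormedSpace ℝ E]
    {u u' : ℝ → E} {g : ℝ → ℝ} {a b : ℝ}
    (hftc : ∀ y ∈ Ico a b, u y - u a = ∫ t in a..y, u' t)
    (hmeas : AEStronglyMeasurable u' (volume.restrict (Ioo a b)))
    (hg : IntegrableOn g (Ioo a b)) (hle : ∀ t ∈ Ioo a b, ‖u' t‖ ≤ g t) :
    ∃ L, ∀ x ∈ Ico a b, ‖u x - L‖ ≤ ∫ t in Ioo x b, g t := by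
  have hint : IntegrableOn u' (Ioo a b) :=
    hg.mono' hmeas (ae_restrict_of_forall_mem measurableSet_Ioo hle)
  have hii : ∀ x ∈ Icc a b, ∀ y ∈ Icc a b, x ≤ y → IntervalIntegrable u' volume x y :=
    fun x hx y hy hxy => (intervalIntegrable_iff_integrableOn_Ioo_of_le hxy).mpr
      (hint.mono_set (Ioo_subset_Ioo hx.1 hy.2))
  refine ⟨u a + ∫ t in a..b, u' t, fun x hx => ?_⟩
  have hab : a ≤ b := hx.1.trans hx.2.le
  have hsplit : u x - (u a + ∫ t in a..b, u' t) = -∫ t in x..b, u' t := by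
    rw [← intervalIntegral.integral_add_adjacent_intervals
      (hii a ⟨le_rfl, hab⟩ x (Ico_subset_Icc_self hx) hx.1)
      (hii x (Ico_subset_Icc_self hx) b ⟨hab, le_rfl⟩ hx.2.le), ← hftc x hx]
    abel
  rw [hsplit, norm_neg, intervalIntegral.integral_of_le hx.2.le, integral_Ioc_eq_integral_Ioo]
  exact norm_integral_le_of_norm_le (hg.mono_set (Ioo_subset_Ioo_left hx.1))
    (ae_restrict_of_forall_mem measurableSet_Ioo fun t ht => hle t ⟨hx.1.trans_lt ht.1, ht.2⟩)

lemma eq_zero_of_tendsto_sub_mul_of_integrableOn {φ : ℝ → ℝ} {a b c : ℝ} (hab : a < b)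
    (hφ : IntegrableOn φ (Ioo a b)) (hlim : Tendsto (fun x => (b - x) * φ x) (𝓝[<] b) (𝓝 c)) :
    c = 0 := by
  by_contra hc
  have hc' : 0 < |c| := abs_pos.mpr hc
  have hev : ∀ᶠ x in 𝓝[<] b, |c| / 2 < |(b - x) * φ x| ∧ x ∈ Ioo a b :=
    (hlim.abs.eventually (lt_mem_nhds (by linarith))).and (Ioo_mem_nhdsLT hab)
  obtain ⟨a', ha', hsub⟩ := mem_nhdsLT_iff_exists_Ioo_subset.mp hev
  have hinv : IntegrableOn (fun x => (b - x)⁻¹) (Ioo a' b) := by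
    refine Integrable.mono' (((hφ.mono_set fun x hx => (hsub hx).2).norm).const_mul (2 / |c|))
      (by fun_prop) (ae_restrict_of_forall_mem measurableSet_Ioo fun x hx => ?_)
    have hbx : 0 < b - x := sub_pos.mpr hx.2
    have hx' := (hsub hx).1
    rw [abs_mul, abs_of_pos hbx] at hx'
    rw [Real.norm_of_nonneg (inv_nonneg.mpr hbx.le), Real.norm_eq_abs, inv_le_iff_one_le_mul₀ hbx]
    calc (1 : ℝ) = 2 / |c| * (|c| / 2) := by field_simp
      _ ≤ 2 / |c| * ((b - x) * |φ x|) := by gcongr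
      _ = 2 / |c| * |φ x| * (b - x) := by ring
  have : IntervalIntegrable (fun x => (x - b)⁻¹) volume a' b := by
    simpa only [← neg_sub b, inv_neg, Pi.neg_def] using
      ((intervalIntegrable_iff_integrableOn_Ioo_of_le ha'.le).mpr hinv).neg
  rcases intervalIntegrable_sub_inv_iff.mp this with h | h
  · exact ha'.ne h
  · exact h right_mem_uIcc

lemma eq_zero_of_tendsto_nhdsLT_one {E : Type*} [NormedAddCommGroup E] {u : ℝ → E} {L : E}
    (hu : IntegrableOn (fun x => ‖u x‖ ^ 2 * (1 - x ^ 2)⁻¹) (Ioo 0 1))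
    (hlim : Tendsto u (𝓝[<] 1) (𝓝 L)) : L = 0 := by
  have hlim' : Tendsto (fun x => (1 - x) * (‖u x‖ ^ 2 * (1 - x ^ 2)⁻¹)) (𝓝[<] 1)
      (𝓝 (‖L‖ ^ 2 * (1 + 1)⁻¹)) := by
    refine ((hlim.norm.pow 2).mul ((tendsto_const_nhds.add tendsto_id).inv₀ (by norm_num)
      |>.mono_left nhdsWithin_le_nhds)).congr' ?_
    filter_upwards [Ioo_mem_nhdsLT zero_lt_one] with x hx
    have : 1 - x ≠ 0 := by linarith [hx.2]
    rw [id, show (1 : ℝ) - x ^ 2 = (1 + x) * (1 - x) by ring]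
    field_simp
  simpa using eq_zero_of_tendsto_sub_mul_of_integrableOn one_pos hu hlim'

lemma norm_sq_mul_le_of_pos {p : ℝ} (hp : 0 < p) (a b : ℂ) :
    ‖a‖ ^ 2 * p ≤ 2 * (‖-(p : ℂ) * a + b‖ ^ 2 * p⁻¹) + 2 * (‖b‖ ^ 2 * p⁻¹) := by
  have htri : p * ‖a‖ ≤ ‖-(p : ℂ) * a + b‖ + ‖b‖ := by
    calc p * ‖a‖ = ‖(-(p : ℂ) * a + b) - b‖ := by
          rw [add_sub_cancel_right, norm_mul, norm_neg, Complex.norm_real,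
            Real.norm_of_nonneg hp.le]
      _ ≤ ‖-(p : ℂ) * a + b‖ + ‖b‖ := norm_sub_le _ _
  have hsq : (p * ‖a‖) ^ 2 ≤ 2 * ‖-(p : ℂ) * a + b‖ ^ 2 + 2 * ‖b‖ ^ 2 := calc
    (p * ‖a‖) ^ 2 ≤ (‖-(p : ℂ) * a + b‖ + ‖b‖) ^ 2 := pow_le_pow_left₀ (by positivity) htri 2
    _ ≤ 2 * ‖-(p : ℂ) * a + b‖ ^ 2 + 2 * ‖b‖ ^ 2 := by
      nlinarith [sq_nonneg (‖-(p : ℂ) * a + b‖ - ‖b‖)]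
  calc ‖a‖ ^ 2 * p = (p * ‖a‖) ^ 2 * p⁻¹ := by field_simp
    _ ≤ (2 * ‖-(p : ℂ) * a + b‖ ^ 2 + 2 * ‖b‖ ^ 2) * p⁻¹ := by gcongr
    _ = _ := by ring

namespace InJacobiMaxDomain

variable {k : ℝ} {u u' u'' : ℝ → ℂ}

lemma integrableOn_norm_sq_mul (hu : InJacobiMaxDomain k u u' u'') :
    IntegrableOn (fun x => ‖u'' x‖ ^ 2 * (1 - x ^ 2)) (Ioo (-1) 1) := by
  obtain ⟨-, hi₂, -, -, h₀, hℓ⟩ := hu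
  have hmeas : AEStronglyMeasurable u'' (volume.restrict (Ioo (-1) 1)) :=
    (locallyIntegrableOn_Ioo_of_intervalIntegrable hi₂).aestronglyMeasurable
  refine Integrable.mono' ((hℓ.const_mul 2).add ((h₀.const_mul (k ^ 2)).const_mul 2))
    ((hmeas.norm.pow 2).mul (by fun_prop))
    (ae_restrict_of_forall_mem measurableSet_Ioo fun x hx => ?_)
  have hp : 0 < 1 - x ^ 2 := by nlinarith [hx.1, hx.2]
  have h := norm_sq_mul_le_of_pos hp (u'' x) (k * u x)
  rw [norm_mul, Complex.norm_real, Real.norm_eq_abs, mul_pow, sq_abs] at h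
  rw [Real.norm_of_nonneg (by positivity)]
  simpa only [Pi.add_apply, mul_assoc] using h

lemma comp_neg (hu : InJacobiMaxDomain k u u' u'') :
    InJacobiMaxDomain k (fun x => u (-x)) (fun x => -u' (-x)) (fun x => u'' (-x)) := by
  obtain ⟨hi₁, hi₂, hftc₁, hftc₂, h₀, hℓ⟩ := hu
  have hneg : ∀ x ∈ Ioo (-1 : ℝ) 1, -x ∈ Ioo (-1 : ℝ) 1 :=
    fun x hx => ⟨by linarith [hx.2], by linarith [hx.1]⟩
  refine ⟨fun x hx y hy => ?_, fun x hx y hy => ?_, fun x hx y hy => ?_, fun x hx y hy => ?_,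
    by simpa using h₀.comp_neg, by simpa using hℓ.comp_neg⟩
  · simpa [Pi.neg_def] using
      ((IntervalIntegrable.iff_comp_neg).mp (hi₁ _ (hneg x hx) _ (hneg y hy))).neg
  · simpa using (IntervalIntegrable.iff_comp_neg).mp (hi₂ _ (hneg x hx) _ (hneg y hy))
  · rw [hftc₁ _ (hneg x hx) _ (hneg y hy), intervalIntegral.integral_neg,
      intervalIntegral.integral_comp_neg (fun t => u' t), intervalIntegral.integral_symm]
  · rw [neg_sub_neg, hftc₂ _ (hneg y hy) _ (hneg x hx),
      intervalIntegral.integral_comp_neg (fun t => u'' t)]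

lemma exists_norm_deriv_le (hu : InJacobiMaxDomain k u u' u'') :
    ∃ C, ∀ x ∈ Ico (0 : ℝ) 1, ‖u' x‖ ≤ C * (1 - x) ^ (-1/4 : ℝ) := by
  have hw : IntegrableOn (fun t => ‖u'' t‖ ^ 2 * (1 - t ^ 2)) (Ico 0 1) :=
    hu.integrableOn_norm_sq_mul.mono_set (Ico_subset_Ioo_left (by norm_num))
  set M := ∫ t in Ico 0 1, ‖u'' t‖ ^ 2 * (1 - t ^ 2)
  obtain ⟨-, hi₂, -, hftc₂, -, -⟩ := hu
  refine ⟨‖u' 0‖ + (M / 2 + 1), fun x hx => ?_⟩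
  have h0 : (0 : ℝ) ∈ Ioo (-1) 1 := by norm_num
  have hx' : x ∈ Ioo (-1) 1 := ⟨by linarith [hx.1], hx.2⟩
  have hone : 1 ≤ (1 - x) ^ (-1/4 : ℝ) :=
    Real.one_le_rpow_of_pos_of_le_one_of_nonpos (by linarith [hx.2]) (by linarith [hx.1])
      (by norm_num)
  calc ‖u' x‖ = ‖u' 0 + ∫ t in 0..x, u'' t‖ := by rw [← hftc₂ 0 h0 x hx', add_sub_cancel]
    _ ≤ ‖u' 0‖ + ∫ t in 0..x, ‖u'' t‖ :=
      (norm_add_le _ _).trans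
        (by gcongr; exact intervalIntegral.norm_integral_le_integral_norm hx.1)
    _ ≤ ‖u' 0‖ + (M / 2 + 1) * (1 - x) ^ (-1/4 : ℝ) := by
      gcongr
      exact integral_norm_le_of_integrableOn_norm_sq_mul hx.1 hx.2 (hi₂ 0 h0 x hx') hw
    _ ≤ (‖u' 0‖ + (M / 2 + 1)) * (1 - x) ^ (-1/4 : ℝ) := by nlinarith [norm_nonneg (u' 0)]

lemma exists_norm_le (hu : InJacobiMaxDomain k u u' u'') :
    ∃ C, ∀ x ∈ Ico (0 : ℝ) 1, ‖u x‖ ≤ C * (1 - x) ^ (3/4 : ℝ) := by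
  obtain ⟨C, hC⟩ := hu.exists_norm_deriv_le
  obtain ⟨hi₁, -, hftc₁, -, h₀, -⟩ := hu
  have hmeas : AEStronglyMeasurable u' (volume.restrict (Ioo 0 1)) :=
    (locallyIntegrableOn_Ioo_of_intervalIntegrable hi₁).aestronglyMeasurable.mono_measure
      (Measure.restrict_mono (Ioo_subset_Ioo_left (by norm_num)) le_rfl)
  have hpow : IntervalIntegrable (fun t : ℝ => (1 - t) ^ (-1/4 : ℝ)) volume 0 1 := by
    simpa using (intervalIntegral.intervalIntegrable_rpow' (a := 0) (b := 1) (r := -1/4)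
      (by norm_num)).comp_sub_left 1 |>.symm
  have hint : IntegrableOn (fun t => C * (1 - t) ^ (-1/4 : ℝ)) (Ioo 0 1) :=
    ((intervalIntegrable_iff_integrableOn_Ioo_of_le zero_le_one).mp hpow).const_mul C
  have h0 : (0 : ℝ) ∈ Ioo (-1) 1 := by norm_num
  obtain ⟨L, hL⟩ := exists_norm_sub_le_setIntegral
    (fun y hy => hftc₁ 0 h0 y ⟨by linarith [hy.1], hy.2⟩) hmeas hint
    (fun t ht => hC t ⟨ht.1.le, ht.2⟩)
  have hL' : ∀ x ∈ Ico (0 : ℝ) 1, ‖u x - L‖ ≤ 4/3 * C * (1 - x) ^ (3/4 : ℝ) := by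
    intro x hx
    convert hL x hx using 1
    rw [integral_const_mul, setIntegral_Ioo_one_sub_rpow (by norm_num) hx.2.le]
    norm_num
    ring
  have hlim : Tendsto u (𝓝[<] 1) (𝓝 L) := by
    rw [tendsto_iff_norm_sub_tendsto_zero]
    refine squeeze_zero_norm' ?_ (by simpa only [mul_zero] using
      (tendsto_one_sub_rpow_nhdsLT_one (r := 3/4) (by norm_num)).const_mul (4/3 * C))
    filter_upwards [Ioo_mem_nhdsLT zero_lt_one] with x hx
    rw [norm_norm]
    exact hL' x ⟨hx.1.le, hx.2⟩
  have hL0 : L = 0 :=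
    eq_zero_of_tendsto_nhdsLT_one (h₀.mono_set (Ioo_subset_Ioo_left (by norm_num))) hlim
  exact ⟨4/3 * C, fun x hx => by simpa [hL0] using hL' x hx⟩

end InJacobiMaxDomain

lemma tendsto_mul_star_nhdsLT_one {k k' : ℝ} {f f' f'' g g' g'' : ℝ → ℂ}
    (hf : InJacobiMaxDomain k f f' f'') (hg : InJacobiMaxDomain k' g g' g'') :
    Tendsto (fun x => f' x * star (g x)) (𝓝[<] 1) (𝓝 0) := by
  obtain ⟨C₁, hC₁⟩ := hf.exists_norm_deriv_le
  obtain ⟨C₂, hC₂⟩ := hg.exists_norm_le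
  refine squeeze_zero_norm' ?_ (by simpa only [mul_zero] using (tendsto_one_sub_rpow_nhdsLT_one
    (r := 1/2) (by norm_num)).const_mul (C₁ * C₂))
  filter_upwards [Ioo_mem_nhdsLT zero_lt_one] with x hx
  have hx' : x ∈ Ico (0 : ℝ) 1 := ⟨hx.1.le, hx.2⟩
  rw [norm_mul, norm_star]
  calc ‖f' x‖ * ‖g x‖
      ≤ C₁ * (1 - x) ^ (-1/4 : ℝ) * (C₂ * (1 - x) ^ (3/4 : ℝ)) :=
        mul_le_mul (hC₁ x hx') (hC₂ x hx') (norm_nonneg _) ((norm_nonneg _).trans (hC₁ x hx'))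
    _ = C₁ * C₂ * (1 - x) ^ (1/2 : ℝ) := by
        rw [mul_mul_mul_comm, ← Real.rpow_add (by linarith [hx.2])]
        norm_num

theorem strong_limit_point_general (k : ℝ)
    (f f' f'' g g' g'' : ℝ → ℂ)
    (hf : InJacobiMaxDomain k f f' f'') (hg : InJacobiMaxDomain k g g' g'') :
    Tendsto (fun x => f' x * star (g x)) (𝓝[<] (1 : ℝ)) (𝓝 0) ∧
    Tendsto (fun x => f' x * star (g x)) (𝓝[>] (-1 : ℝ)) (𝓝 0) := by
  refine ⟨tendsto_mul_star_nhdsLT_one hf hg, ?_⟩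
  have h := (tendsto_mul_star_nhdsLT_one hf.comp_neg hg.comp_neg).comp tendsto_neg_nhdsGT_neg
  simpa [Function.comp_def] using h.neg

/-- The strong limit-point condition at both endpoints: for all `f, g` in the maximal
domain `Δ` of the Jacobi expression, `f'(x)·conj(g(x)) → 0` as `x → 1⁻` and as
`x → -1⁺`. -/
theorem strong_limit_point (k : ℝ) (hk : 0 ≤ k)
    (f f' f'' g g' g'' : ℝ → ℂ)
    (hf : InJacobiMaxDomain k f f' f'') (hg : InJacobiMaxDomain k g g' g'') :
    Tendsto (fun x => f' x * star (g x)) (𝓝[<] (1 : ℝ)) (𝓝 0) ∧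
    Tendsto (fun x => f' x * star (g x)) (𝓝[>] (-1 : ℝ)) (𝓝 0) :=
  strong_limit_point_general k f f' f'' g g' g'' hf hg
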